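/- Every generalized Kracht formula α(x_0) is equivalent (in every Kripke frame, with atoms read via the # translation) to a first-order formula obtained from atoms x_l ∈ E, with E quasi-safe, using only conjunction, disjunction and restricted universal quantification. -/

import Mathlib

set_option autoImplicit true

universe u v w

/-- Modal formulas over modality indices `Λ` and propositional variables `V`. -/
inductive MF (Λ : Type u) (V : Type v) : Type (max u v)
  | var : V → MF Λ V
  | top : MF Λ V
  | bot : MF Λ V
  | and : MF Λ V → MF Λ V → MF Λ V
  | or  : MF Λ V → MF Λ V → MF Λ V
  | neg : MF Λ V → MF Λ V
  | imp : MF Λ V → MF Λ V → MF Λ V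
  | dia : Λ → MF Λ V → MF Λ V
  | box : Λ → MF Λ V → MF Λ V

namespace MF
variable {Λ : Type u} {V : Type v}

/-- The set of propositional variables occurring in a modal formula. -/
def vars : MF Λ V → Set V
  | var p => {p}
  | top => ∅
  | bot => ∅
  | and a b => vars a ∪ vars b
  | or a b => vars a ∪ vars b
  | neg a => vars a
  | imp a b => vars a ∪ vars b
  | dia _ a => vars a
  | box _ a => vars a

end MF

/-- Positive modal formulas: built without `¬` and `→`. -/
inductive Positive {Λ : Type u} {V : Type v} : MF Λ V → Prop
  | var (p : V) : Positive (.var p)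
  | top : Positive .top
  | bot : Positive .bot
  | and {a b} : Positive a → Positive b → Positive (.and a b)
  | or {a b} : Positive a → Positive b → Positive (.or a b)
  | dia (l) {a} : Positive a → Positive (.dia l a)
  | box (l) {a} : Positive a → Positive (.box l a)

/-- A Kripke frame with accessibility relations indexed by `Λ`. -/
structure Frame (Λ : Type u) where
  W : Type w
  R : Λ → W → W → Prop

/-- Kripke satisfaction `F, x, θ ⊨ φ`. -/
def sat {Λ : Type u} {V : Type v} (F : Frame Λ) (θ : V → Set F.W) : F.W → MF Λ V → Prop
  | x, .var p => x ∈ θ p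
  | _, .top => True
  | _, .bot => False
  | x, .and a b => sat F θ x a ∧ sat F θ x b
  | x, .or a b => sat F θ x a ∨ sat F θ x b
  | x, .neg a => ¬ sat F θ x a
  | x, .imp a b => sat F θ x a → sat F θ x b
  | x, .dia l a => ∃ y, F.R l x y ∧ sat F θ y a
  | x, .box l a => ∀ y, F.R l x y → sat F θ y a

/-- `BoxF φ p S`: `φ` is a box-formula with head `p`, in which the set of variables
occurring not as the head is `S`. -/
inductive BoxF {Λ : Type u} {V : Type v} : MF Λ V → V → Set V → Prop
  | var (p : V) : BoxF (.var p) p ∅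
  | imp {POS ψ p S} : Positive POS → BoxF ψ p S → BoxF (.imp POS ψ) p (MF.vars POS ∪ S)
  | box (l) {ψ p S} : BoxF ψ p S → BoxF (.box l ψ) p S

/-- `RegBF r φ p`: relative to the rank assignment `r`, `φ` is a regular box-formula
with head `p` (of rank `r p`): all variables of the positive antecedents have rank `< r p`. -/
inductive RegBF {Λ : Type u} {V : Type v} (r : V → ℕ) : MF Λ V → V → Prop
  | var (p : V) : RegBF r (.var p) p
  | imp {POS ψ p} : Positive POS → (∀ q ∈ MF.vars POS, r q < r p) →
      RegBF r ψ p → RegBF r (.imp POS ψ) p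
  | box (l) {ψ p} : RegBF r ψ p → RegBF r (.box l ψ) p

/-- The edge relation of the dependency graph of a set `A` of box-formulas:
`p → q` iff `p` occurs (not as the head) in some member of `A` with head `q`. -/
def depEdge {Λ : Type u} {V : Type v} (A : Set (MF Λ V)) (p q : V) : Prop :=
  ∃ φ ∈ A, ∃ S, BoxF φ q S ∧ p ∈ S

/-- A set of box-formulas is regular if its dependency graph has no oriented cycle. -/
def RegularSet {Λ : Type u} {V : Type v} (A : Set (MF Λ V)) : Prop :=
  ∀ p : V, ¬ Relation.TransGen (depEdge A) p p

/-- `R_λ^{-1}(A) = {u : ∃ v, u R_λ v ∧ v ∈ A}`. -/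
def Rinv {Λ : Type u} (F : Frame Λ) (l : Λ) (A : Set F.W) : Set F.W :=
  {u | ∃ v, F.R l u v ∧ v ∈ A}

/-- `R_λ^□(A) = {u : ∀ v, u R_λ v → v ∈ A}`. -/
def RboxOp {Λ : Type u} (F : Frame Λ) (l : Λ) (A : Set F.W) : Set F.W :=
  {u | ∀ v, F.R l u v → v ∈ A}

/-- `R_λ(A) = {u : ∃ v, v R_λ u ∧ v ∈ A}`. -/
def Rfwd {Λ : Type u} (F : Frame Λ) (l : Λ) (A : Set F.W) : Set F.W :=
  {u | ∃ v, F.R l v u ∧ v ∈ A}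

/-- The interpretation of the expression `KP^{POS}` in a frame `F`, the set variables
`P^l_i` being interpreted by `P`.  (Junk value `∅` on non-positive constructors.) -/
def KPsem {Λ : Type u} (F : Frame Λ) (P : ℕ × ℕ → Set F.W) : MF Λ (ℕ × ℕ) → Set F.W
  | .var q => P q
  | .top => Set.univ
  | .bot => ∅
  | .and a b => KPsem F P a ∩ KPsem F P b
  | .or a b => KPsem F P a ∪ KPsem F P b
  | .dia l a => Rinv F l (KPsem F P a)
  | .box l a => RboxOp F l (KPsem F P a)
  | .neg _ => ∅
  | .imp _ _ => ∅

/-- The interpretation of the expression `KV^φ` in a frame `F`: the set variables `P^l_i`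
are interpreted by `P` and the extra variable `#` by the second argument.
(Junk value `∅` on constructors that do not occur in regular box-formulas.) -/
def KVsem {Λ : Type u} (F : Frame Λ) (P : ℕ × ℕ → Set F.W) : MF Λ (ℕ × ℕ) → Set F.W → Set F.W
  | .var _, X => X
  | .imp POS ψ, X => KVsem F P ψ (X ∩ KPsem F P POS)
  | .box l ψ, X => KVsem F P ψ (Rfwd F l X)
  | _, _ => ∅

/-- The semantic minimal valuation: given points `g j` and sets `f j` of regular
box-formulas to be verified at `g j`, `thetaMinSem F g f k i` is the minimal value of the
variable `p^k_i`; it is defined by recursion on the rank `k` as the union, over all `j` and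
all `φ ∈ f j` with head `p^k_i`, of `KV^φ(g j)` computed with the minimal values of the
variables of lower rank. -/
noncomputable def thetaMinSem {Λ : Type u} (F : Frame Λ) {ι : Type w} (g : ι → F.W)
    (f : ι → Set (MF Λ (ℕ × ℕ))) : ℕ → ℕ → Set F.W :=
  fun k => Nat.strongRecOn (motive := fun _ => ℕ → Set F.W) k fun k ih i =>
    ⋃ (j : ι), ⋃ φ ∈ f j, ⋃ (_ : RegBF Prod.fst φ (k, i)),
      KVsem F (fun q => if h : q.1 < k then ih q.1 h q.2 else ∅) φ {g j}

/-- `L`-expressions: terms of the language `L` with individual variables `x_i` (`i : ℕ`),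
constants `⊤, ⊥`, unary `R_λ^{-1}`, `R_λ^□`, `R_λ` and binary `∩`, `∪`. -/
inductive LExp (Λ : Type u) : Type u
  | var : ℕ → LExp Λ
  | top : LExp Λ
  | bot : LExp Λ
  | inter : LExp Λ → LExp Λ → LExp Λ
  | union : LExp Λ → LExp Λ → LExp Λ
  | rinv : Λ → LExp Λ → LExp Λ
  | rbox : Λ → LExp Λ → LExp Λ
  | rfw : Λ → LExp Λ → LExp Λ

namespace LExp
variable {Λ : Type u}

/-- Denotation of an `L`-expression in a frame `F`, the variable `x_i` denoting the
singleton of the point `g i`. -/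
def den (F : Frame Λ) (g : ℕ → F.W) : LExp Λ → Set F.W
  | var i => {g i}
  | top => Set.univ
  | bot => ∅
  | inter a b => den F g a ∩ den F g b
  | union a b => den F g a ∪ den F g b
  | rinv l a => Rinv F l (den F g a)
  | rbox l a => RboxOp F l (den F g a)
  | rfw l a => Rfwd F l (den F g a)

/-- The set of (indices of) individual variables occurring in an `L`-expression. -/
def evars : LExp Λ → Set ℕ
  | var i => {i}
  | top => ∅
  | bot => ∅
  | inter a b => evars a ∪ evars b
  | union a b => evars a ∪ evars b
  | rinv _ a => evars a
  | rbox _ a => evars a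
  | rfw _ a => evars a

end LExp

/-- The subexpression relation on `L`-expressions. -/
inductive Subexp {Λ : Type u} : LExp Λ → LExp Λ → Prop
  | refl (e : LExp Λ) : Subexp e e
  | interL {e a b} : Subexp e a → Subexp e (.inter a b)
  | interR {e a b} : Subexp e b → Subexp e (.inter a b)
  | unionL {e a b} : Subexp e a → Subexp e (.union a b)
  | unionR {e a b} : Subexp e b → Subexp e (.union a b)
  | rinv (l) {e a} : Subexp e a → Subexp e (.rinv l a)
  | rbox (l) {e a} : Subexp e a → Subexp e (.rbox l a)
  | rfw (l) {e a} : Subexp e a → Subexp e (.rfw l a)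

/-- `SafeFor e`: `e` is "safe for" the ambient expression, i.e. `e` is a variable, or
`R_λ(e')` with `e'` safe for it, or an intersection one of whose components is safe for it. -/
inductive SafeFor {Λ : Type u} : LExp Λ → Prop
  | var (i : ℕ) : SafeFor (.var i)
  | rfw (l) {a} : SafeFor a → SafeFor (.rfw l a)
  | interL {a b} : SafeFor a → SafeFor (.inter a b)
  | interR {a b} : SafeFor b → SafeFor (.inter a b)

/-- An `L`-expression is safe if it is safe for itself and the argument of every
subexpression of the form `R_λ(ψ)` is safe for it. -/
def Safe {Λ : Type u} (e : LExp Λ) : Prop :=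
  SafeFor e ∧ ∀ l a, Subexp (.rfw l a) e → SafeFor a

mutual
  /-- The class `K`: the least class of `L`-expressions containing the variables and closed
  under `S ↦ R_λ(S)` and `S ↦ S ∩ E` for `E` a positive combination of members of `K`. -/
  inductive InK {Λ : Type u} : LExp Λ → Prop
    | var (i : ℕ) : InK (.var i)
    | rfw (l : Λ) {S : LExp Λ} : InK S → InK (.rfw l S)
    | inter {S E : LExp Λ} : InK S → PosOfK E → InK (.inter S E)
  /-- Positive combinations of members of `K`: built from members of `K` using only
  `∩`, `∪`, `R_λ^{-1}`, `R_λ^□`, `⊤`, `⊥`. -/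
  inductive PosOfK {Λ : Type u} : LExp Λ → Prop
    | ofK {e : LExp Λ} : InK e → PosOfK e
    | top : PosOfK .top
    | bot : PosOfK .bot
    | inter {a b} : PosOfK a → PosOfK b → PosOfK (.inter a b)
    | union {a b} : PosOfK a → PosOfK b → PosOfK (.union a b)
    | rinv (l) {a} : PosOfK a → PosOfK (.rinv l a)
    | rbox (l) {a} : PosOfK a → PosOfK (.rbox l a)
end

/-- Quasi-safe `L`-expressions: positive combinations of safe expressions, i.e. built from
safe expressions using only `∩`, `∪`, `R_λ^{-1}`, `R_λ^□`, `⊤`, `⊥`. -/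
inductive QuasiSafe {Λ : Type u} : LExp Λ → Prop
  | safe {e : LExp Λ} : Safe e → QuasiSafe e
  | top : QuasiSafe .top
  | bot : QuasiSafe .bot
  | inter {a b} : QuasiSafe a → QuasiSafe b → QuasiSafe (.inter a b)
  | union {a b} : QuasiSafe a → QuasiSafe b → QuasiSafe (.union a b)
  | rinv (l) {a} : QuasiSafe a → QuasiSafe (.rinv l a)
  | rbox (l) {a} : QuasiSafe a → QuasiSafe (.rbox l a)

/-- `ReplOne i ψ φ φ'`: `φ'` is the result of replacing one occurrence of the variable
`x_i` in `φ` by `ψ`. -/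
inductive ReplOne {Λ : Type u} (i : ℕ) (ψ : LExp Λ) : LExp Λ → LExp Λ → Prop
  | here : ReplOne i ψ (.var i) ψ
  | interL {a a' b} : ReplOne i ψ a a' → ReplOne i ψ (.inter a b) (.inter a' b)
  | interR {a b b'} : ReplOne i ψ b b' → ReplOne i ψ (.inter a b) (.inter a b')
  | unionL {a a' b} : ReplOne i ψ a a' → ReplOne i ψ (.union a b) (.union a' b)
  | unionR {a b b'} : ReplOne i ψ b b' → ReplOne i ψ (.union a b) (.union a b')
  | rinv (l) {a a'} : ReplOne i ψ a a' → ReplOne i ψ (.rinv l a) (.rinv l a')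
  | rbox (l) {a a'} : ReplOne i ψ a a' → ReplOne i ψ (.rbox l a) (.rbox l a')
  | rfw (l) {a a'} : ReplOne i ψ a a' → ReplOne i ψ (.rfw l a) (.rfw l a')

/-- A finite union of `L`-expressions (empty union is `⊥`). -/
def unionList {Λ : Type u} : List (LExp Λ) → LExp Λ
  | [] => .bot
  | e :: es => .union e (unionList es)

/-- `UnionOfSafe e`: `e` is a finite union of safe expressions. -/
inductive UnionOfSafe {Λ : Type u} : LExp Λ → Prop
  | bot : UnionOfSafe .bot
  | safe {e : LExp Λ} : Safe e → UnionOfSafe e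
  | union {a b} : UnionOfSafe a → UnionOfSafe b → UnionOfSafe (.union a b)

/-- Syntactic `KP^{POS}`: the `L`-expression obtained from the positive formula `POS` by
replacing each set variable `P^l_i` by the `L`-expression `KF (l, i)`.
(Junk value on non-positive constructors.) -/
def KPsub {Λ : Type u} (KF : ℕ × ℕ → LExp Λ) : MF Λ (ℕ × ℕ) → LExp Λ
  | .var q => KF q
  | .top => .top
  | .bot => .bot
  | .and a b => .inter (KPsub KF a) (KPsub KF b)
  | .or a b => .union (KPsub KF a) (KPsub KF b)
  | .dia l a => .rinv l (KPsub KF a)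
  | .box l a => .rbox l (KPsub KF a)
  | .neg _ => .bot
  | .imp _ _ => .bot

/-- Syntactic `KVF^φ(t)`: the `L`-expression obtained from `KV^φ` by substituting the
`L`-expression `t` for `#` and `KF (l, i)` for each set variable `P^l_i`.
(Junk value on constructors that do not occur in regular box-formulas.) -/
def KVFsyn {Λ : Type u} (KF : ℕ × ℕ → LExp Λ) : MF Λ (ℕ × ℕ) → LExp Λ → LExp Λ
  | .var _, t => t
  | .imp POS ψ, t => KVFsyn KF ψ (.inter t (KPsub KF POS))
  | .box l ψ, t => KVFsyn KF ψ (.rfw l t)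
  | _, _ => .bot

open scoped Classical in
/-- The syntactic minimal valuation `KF_f^{p^k_i}` for variables `x_0, …, x_{n-1}` and
`f` assigning to each variable a finite set of regular box-formulas: defined by recursion on
the rank `k` as the union, over all `j < n` and all `φ ∈ f j` with head `p^k_i`, of
`KVF_f^φ(x_j)`, which is `KV^φ` with `x_j` substituted for `#` and `KF_f^{p^l_m}`
substituted for each `P^l_m` with `l < k`. -/
noncomputable def KFsyn {Λ : Type u} (n : ℕ) (f : ℕ → Finset (MF Λ (ℕ × ℕ))) :
    ℕ → ℕ → LExp Λ :=
  fun k => Nat.strongRecOn (motive := fun _ => ℕ → LExp Λ) k fun k ih i =>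
    unionList (((List.range n).flatMap fun j =>
      ((f j).toList.filter fun φ => decide (RegBF Prod.fst φ (k, i))).map fun φ =>
        KVFsyn (fun q => if h : q.1 < k then ih q.1 h q.2 else LExp.bot) φ (LExp.var j)))

/-- The expressions substituted for the set variables `P^l_m`, `l < k`, in `KVF`:
the syntactic minimal valuations of the lower ranks. -/
noncomputable def lowKF {Λ : Type u} (n : ℕ) (f : ℕ → Finset (MF Λ (ℕ × ℕ))) (k : ℕ) :
    ℕ × ℕ → LExp Λ :=
  fun q => if q.1 < k then KFsyn n f q.1 q.2 else LExp.bot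

/-- `KVFat n f φ j k` is the `L`-expression `KVF_f^φ(x_j)` for `φ` a regular box-formula
of rank `k`. -/
noncomputable def KVFat {Λ : Type u} (n : ℕ) (f : ℕ → Finset (MF Λ (ℕ × ℕ)))
    (φ : MF Λ (ℕ × ℕ)) (j k : ℕ) : LExp Λ :=
  KVFsyn (lowKF n f k) φ (.var j)

/-- A labelled tree-like structure: a set of vertices with relations indexed by `Λ`,
a root, and a label function assigning to every vertex a set of labels from `α`. -/
structure LabTree (Λ : Type u) (α : Type v) where
  V : Type
  R : Λ → V → V → Prop
  root : V
  label : V → Set α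

/-- Derivation trees witnessing that a formula is built from base formulas using only
`∧` and `◇_λ`. -/
inductive BuiltT (Λ : Type u) (V : Type v) : Type (max u v)
  | base : MF Λ V → BuiltT Λ V
  | and : BuiltT Λ V → BuiltT Λ V → BuiltT Λ V
  | dia : Λ → BuiltT Λ V → BuiltT Λ V

/-- The modal formula described by a derivation tree. -/
def BuiltT.formula {Λ : Type u} {V : Type v} : BuiltT Λ V → MF Λ V
  | base φ => φ
  | and a b => .and a.formula b.formula
  | dia l a => .dia l a.formula

/-- The derivation tree uses only base formulas from `A`. -/
def BuiltT.Ok {Λ : Type u} {V : Type v} (A : Set (MF Λ V)) : BuiltT Λ V → Prop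
  | base φ => φ ∈ A
  | and a b => a.Ok A ∧ b.Ok A
  | dia _ a => a.Ok A

/-- Helper for gluing two labelled trees at their roots: the relation on the disjoint sum,
with the edges out of the second root re-attached to the first root. -/
def glueR {Λ : Type u} {W₁ W₂ : Type} (R₁ : Λ → W₁ → W₁ → Prop) (R₂ : Λ → W₂ → W₂ → Prop)
    (r₁ : W₁) (r₂ : W₂) (l : Λ) : W₁ ⊕ W₂ → W₁ ⊕ W₂ → Prop
  | Sum.inl a, Sum.inl b => R₁ l a b
  | Sum.inr a, Sum.inr b => R₂ l a b
  | Sum.inl a, Sum.inr b => a = r₁ ∧ R₂ l r₂ b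
  | Sum.inr _, Sum.inl _ => False

open Classical in
/-- Helper for gluing two labelled trees at their roots: the label function, the glued root
receiving the union of the two root labels. -/
noncomputable def glueLab {α : Type w} {W₁ W₂ : Type} (L₁ : W₁ → Set α) (L₂ : W₂ → Set α)
    (r₁ : W₁) (r₂ : W₂) : W₁ ⊕ W₂ → Set α
  | Sum.inl a => if a = r₁ then L₁ r₁ ∪ L₂ r₂ else L₁ a
  | Sum.inr b => L₂ b

/-- Helper for prefixing a labelled tree with a new root: the relation on `Option W`,
with an `R_{l₀}`-edge from the new root `none` to the old root `r`. -/
def prefR {Λ : Type u} {W : Type} (R : Λ → W → W → Prop) (l₀ : Λ) (r : W) (l : Λ) :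
    Option W → Option W → Prop
  | none, some w => l = l₀ ∧ w = r
  | some a, some b => R l a b
  | _, _ => False

/-- Helper for prefixing a labelled tree with a new root: the label function, the new root
getting the empty label. -/
def prefLab {α : Type w} {W : Type} (L : W → Set α) : Option W → Set α
  | none => ∅
  | some a => L a

/-- The reduced syntactical tree of a formula built from base formulas using `∧` and `◇_λ`:
a single root labelled `{a}` for a base formula `a`; for a conjunction, the two trees
with their roots identified (labels united); for `◇_λ ψ`, a new root with empty label and an
`R_λ`-edge to the root of the tree of `ψ`. -/
noncomputable def TreeOf {Λ : Type u} {V : Type v} : BuiltT Λ V → LabTree Λ (MF Λ V)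
  | .base φ =>
      { V := Unit, R := fun _ _ _ => False, root := (), label := fun _ => {φ} }
  | .and b₁ b₂ =>
      let T₁ := TreeOf b₁
      let T₂ := TreeOf b₂
      { V := {v : T₁.V ⊕ T₂.V // v ≠ Sum.inr T₂.root},
        R := fun l u v => glueR T₁.R T₂.R T₁.root T₂.root l u.1 v.1,
        root := ⟨Sum.inl T₁.root, by exact Sum.inl_ne_inr⟩,
        label := fun v => glueLab T₁.label T₂.label T₁.root T₂.root v.1 }
  | .dia l b =>
      let T := TreeOf b
      { V := Option T.V,
        R := fun l' u v => prefR T.R l T.root l' u v,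
        root := none,
        label := fun v => prefLab T.label v }

/-- Restrictedly positive first-order formulas over the frame language: built from atoms
`y ∈ E` (`E` an `L`-expression) using `∧`, `∨` and the restricted quantifiers
`(∀ y ◁_λ x)` and `(∃ y ◁_λ x)`. -/
inductive KrF (Λ : Type u) : Type u
  | atom : ℕ → LExp Λ → KrF Λ
  | and : KrF Λ → KrF Λ → KrF Λ
  | or : KrF Λ → KrF Λ → KrF Λ
  | all : ℕ → Λ → ℕ → KrF Λ → KrF Λ
  | ex : ℕ → Λ → ℕ → KrF Λ → KrF Λ

namespace KrF
variable {Λ : Type u}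

/-- Truth of a restrictedly positive formula in a frame under an assignment `g` of points to
individual variables; the atom `y ∈ E` is read via the `#`-translation, i.e. as membership
of `g y` in the denotation of `E`. -/
def holds (F : Frame Λ) : (ℕ → F.W) → KrF Λ → Prop
  | g, atom y E => g y ∈ E.den F g
  | g, and a b => holds F g a ∧ holds F g b
  | g, or a b => holds F g a ∨ holds F g b
  | g, all y l x β => ∀ w, F.R l (g x) w → holds F (Function.update g y w) β
  | g, ex y l x β => ∃ w, F.R l (g x) w ∧ holds F (Function.update g y w) β

/-- Free variables. -/
def fv : KrF Λ → Set ℕ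
  | atom y E => insert y E.evars
  | and a b => fv a ∪ fv b
  | or a b => fv a ∪ fv b
  | all y _ x β => insert x (fv β \ {y})
  | ex y _ x β => insert x (fv β \ {y})

/-- Bound variables. -/
def bv : KrF Λ → Set ℕ
  | atom _ _ => ∅
  | and a b => bv a ∪ bv b
  | or a b => bv a ∪ bv b
  | all y _ _ β => insert y (bv β)
  | ex y _ _ β => insert y (bv β)

/-- No two distinct quantifier occurrences bind the same variable. -/
def CleanBound : KrF Λ → Prop
  | atom _ _ => True
  | and a b => CleanBound a ∧ CleanBound b ∧ bv a ∩ bv b = ∅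
  | or a b => CleanBound a ∧ CleanBound b ∧ bv a ∩ bv b = ∅
  | all y _ _ β => CleanBound β ∧ y ∉ bv β
  | ex y _ _ β => CleanBound β ∧ y ∉ bv β

/-- Clean formulas: no variable occurs both free and bound, and no two distinct quantifier
occurrences bind the same variable. -/
def Clean (φ : KrF Λ) : Prop := fv φ ∩ bv φ = ∅ ∧ CleanBound φ

/-- All the `L`-expressions occurring in atoms of the formula satisfy `P`. -/
def AtomsAll (P : LExp Λ → Prop) : KrF Λ → Prop
  | atom _ E => P E
  | and a b => AtomsAll P a ∧ AtomsAll P b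
  | or a b => AtomsAll P a ∧ AtomsAll P b
  | all _ _ _ β => AtomsAll P β
  | ex _ _ _ β => AtomsAll P β

/-- Quantifier-free formulas (built from atoms using only `∧` and `∨`). -/
def QFree : KrF Λ → Prop
  | atom _ _ => True
  | and a b => QFree a ∧ QFree b
  | or a b => QFree a ∧ QFree b
  | all _ _ _ _ => False
  | ex _ _ _ _ => False

/-- Formulas built from atoms using only `∧`, `∨` and restricted universal quantification
(no existential quantifier). -/
def NoEx : KrF Λ → Prop
  | atom _ _ => True
  | and a b => NoEx a ∧ NoEx b
  | or a b => NoEx a ∧ NoEx b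
  | all _ _ _ β => NoEx β
  | ex _ _ _ _ => False

/-- `GKok U e φ`: every variable occurring in an `L`-expression of an atom of `φ` is
inherently universal. Here `U` is the set of variables that are inherently universal so far
(initially the free variables) and `e` records whether we are within the scope of an
existential quantifier. -/
def GKok : Set ℕ → Bool → KrF Λ → Prop
  | U, _, atom _ E => E.evars ⊆ U
  | U, e, and a b => GKok U e a ∧ GKok U e b
  | U, e, or a b => GKok U e a ∧ GKok U e b
  | U, false, all y _ _ β => GKok (insert y U) false β
  | U, true, all _ _ _ β => GKok U true β
  | U, _, ex _ _ _ β => GKok U true β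

end KrF

/-- A generalized Kracht formula with free variables: clean, restrictedly positive with safe
atoms, and in every atom `y ∈ E` all variables of `E` are inherently universal. -/
def IsGenKrachtFV {Λ : Type u} (α : KrF Λ) : Prop :=
  α.Clean ∧ α.AtomsAll Safe ∧ α.GKok α.fv false

/-- A generalized Kracht formula: a generalized Kracht formula with free variables whose
only free variable is `x0`. -/
def IsGenKracht {Λ : Type u} (α : KrF Λ) (x0 : ℕ) : Prop :=
  IsGenKrachtFV α ∧ α.fv = {x0}

/-- Generalized Sahlqvist antecedents: built from regular box-formulas and negative
formulas using only `∧`, `∨`, `◇_λ`. -/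
inductive GSAnt {Λ : Type u} : MF Λ (ℕ × ℕ) → Prop
  | reg {φ p} : RegBF Prod.fst φ p → GSAnt φ
  | neg {φ} : Positive φ → GSAnt (.neg φ)
  | and {a b} : GSAnt a → GSAnt b → GSAnt (.and a b)
  | or {a b} : GSAnt a → GSAnt b → GSAnt (.or a b)
  | dia (l) {a} : GSAnt a → GSAnt (.dia l a)

/-- Generalized Sahlqvist formulas: built from generalized Sahlqvist implications
`GSA → ⊥` by applying boxes and conjunctions, and disjunctions only to formulas without
common propositional variables. -/
inductive GSF {Λ : Type u} : MF Λ (ℕ × ℕ) → Prop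
  | impl {a} : GSAnt a → GSF (.imp a .bot)
  | box (l) {a} : GSF a → GSF (.box l a)
  | and {a b} : GSF a → GSF b → GSF (.and a b)
  | or {a b} : GSF a → GSF b → MF.vars a ∩ MF.vars b = ∅ → GSF (.or a b)

open Classical in
/-- The modal translation `E^T` of a quasi-safe expression: safe subexpressions are
replaced by their associated propositional variables `p_E`, and `∩, ∪, R^{-1}_λ, R^□_λ`
become `∧, ∨, ◇_λ, □_λ`. -/
noncomputable def Etrans {Λ : Type u} (pE : LExp Λ → ℕ × ℕ) : LExp Λ → MF Λ (ℕ × ℕ)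
  | .var i => .var (pE (.var i))
  | .top => .top
  | .bot => .bot
  | .inter a b =>
      if Safe (LExp.inter a b) then .var (pE (.inter a b))
      else .and (Etrans pE a) (Etrans pE b)
  | .union a b =>
      if Safe (LExp.union a b) then .var (pE (.union a b))
      else .or (Etrans pE a) (Etrans pE b)
  | .rinv l a =>
      if Safe (LExp.rinv l a) then .var (pE (.rinv l a)) else .dia l (Etrans pE a)
  | .rbox l a =>
      if Safe (LExp.rbox l a) then .var (pE (.rbox l a)) else .box l (Etrans pE a)
  | .rfw l a => if Safe (LExp.rfw l a) then .var (pE (.rfw l a)) else .bot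

/-- A finite disjunction of modal formulas (empty disjunction is `⊥`). -/
def orList {Λ : Type u} {V : Type v} : List (MF Λ V) → MF Λ V
  | [] => .bot
  | a :: as => .or a (orList as)

/-!
Existential quantifiers are eliminated from the inside out. Below an existential quantifier
the expressions of all atoms only mention inherently universal variables, which stay fixed
(cleanliness forbids rebinding them), so every subformula there is equivalent to a
disjunction of clauses, i.e. of conjunctions of atoms `x_l ∈ E` with `E` quasi-safe.
A quantifier `(∃ z ◁_λ v)` or `(∀ z ◁_λ v)` applied to such a disjunction is absorbed by
gathering the atoms about `z` of a clause into one expression `E`: the existential quantifier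
yields the atom `v ∈ R_λ^{-1}(E)`; for the universal one, the `z`-free parts of the clauses
do not depend on `z`, so one guesses the set `T` of clauses whose `z`-free part holds and
obtains the atom `v ∈ R_λ^□(⋃_{c ∈ T} E_c)`.
-/

open Function

variable {Λ : Type u}

theorem LExp.den_update_of_notMem_evars (F : Frame Λ) (g : ℕ → F.W) (w : F.W) {z : ℕ}
    {E : LExp Λ} (hz : z ∉ E.evars) : E.den F (update g z w) = E.den F g := by
  induction E with
  | var i =>
      simp only [LExp.evars, Set.mem_singleton_iff] at hz
      simp [LExp.den, update_of_ne (Ne.symm hz)]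
  | top | bot => rfl
  | inter a b iha ihb | union a b iha ihb =>
      simp only [LExp.evars, Set.mem_union, not_or] at hz
      simp only [LExp.den, iha hz.1, ihb hz.2]
  | rinv l a ih | rbox l a ih | rfw l a ih => simp only [LExp.den, ih hz]

def interList : List (LExp Λ) → LExp Λ
  | [] => .top
  | e :: es => .inter e (interList es)

theorem mem_den_interList (F : Frame Λ) (g : ℕ → F.W) (x : F.W) (L : List (LExp Λ)) :
    x ∈ (interList L).den F g ↔ ∀ E ∈ L, x ∈ E.den F g := by
  induction L with
  | nil => simp [interList, LExp.den]
  | cons e es ih => simp [interList, LExp.den, ih]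

theorem mem_den_unionList (F : Frame Λ) (g : ℕ → F.W) (x : F.W) (L : List (LExp Λ)) :
    x ∈ (unionList L).den F g ↔ ∃ E ∈ L, x ∈ E.den F g := by
  induction L with
  | nil => simp [unionList, LExp.den]
  | cons e es ih => simp [unionList, LExp.den, ih]

def QuasiSafeIn (U : Set ℕ) (E : LExp Λ) : Prop :=
  QuasiSafe E ∧ E.evars ⊆ U

namespace QuasiSafeIn

variable {U : Set ℕ}

theorem top : QuasiSafeIn U (.top : LExp Λ) :=
  ⟨.top, by simp [LExp.evars]⟩

theorem rinv (l : Λ) {E : LExp Λ} (h : QuasiSafeIn U E) : QuasiSafeIn U (.rinv l E) :=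
  ⟨.rinv l h.1, h.2⟩

theorem rbox (l : Λ) {E : LExp Λ} (h : QuasiSafeIn U E) : QuasiSafeIn U (.rbox l E) :=
  ⟨.rbox l h.1, h.2⟩

theorem interList {L : List (LExp Λ)} (h : ∀ E ∈ L, QuasiSafeIn U E) :
    QuasiSafeIn U (_root_.interList L) := by
  induction L with
  | nil => exact top
  | cons e es ih =>
      have he := h e List.mem_cons_self
      have hes := ih fun E hE => h E (List.mem_cons_of_mem e hE)
      exact ⟨.inter he.1 hes.1, Set.union_subset he.2 hes.2⟩

theorem unionList {L : List (LExp Λ)} (h : ∀ E ∈ L, QuasiSafeIn U E) :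
    QuasiSafeIn U (_root_.unionList L) := by
  induction L with
  | nil => exact ⟨.bot, by simp [_root_.unionList, LExp.evars]⟩
  | cons e es ih =>
      have he := h e List.mem_cons_self
      have hes := ih fun E hE => h E (List.mem_cons_of_mem e hE)
      exact ⟨.union he.1 hes.1, Set.union_subset he.2 hes.2⟩

end QuasiSafeIn

open Classical in
theorem forall_exists_mem_and_iff_exists_sublist {α β : Type*} (ps : List α) (C : α → Prop)
    (S : β → Prop) (A : α → β → Prop) :
    (∀ w, S w → ∃ p ∈ ps, C p ∧ A p w) ↔
      ∃ T ∈ ps.sublists, (∀ p ∈ T, C p) ∧ ∀ w, S w → ∃ p ∈ T, A p w := by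
  constructor
  · intro h
    refine ⟨ps.filter (fun p => decide (C p)), List.mem_sublists.2 List.filter_sublist,
      fun p hp => of_decide_eq_true (List.mem_filter.1 hp).2, fun w hw => ?_⟩
    obtain ⟨p, hp, hC, hA⟩ := h w hw
    exact ⟨p, List.mem_filter.2 ⟨hp, decide_eq_true hC⟩, hA⟩
  · rintro ⟨T, hT, hC, hA⟩ w hw
    obtain ⟨p, hp, hAp⟩ := hA w hw
    exact ⟨p, (List.mem_sublists.1 hT).subset hp, hC p hp, hAp⟩

/-- A clause `[(l₁, E₁), …, (lₙ, Eₙ)]` stands for the conjunction of the atoms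
`x_{l₁} ∈ E₁, …, x_{lₙ} ∈ Eₙ`. -/
abbrev Clause (Λ : Type u) := List (ℕ × LExp Λ)

namespace Clause

def Holds (F : Frame Λ) (g : ℕ → F.W) (c : Clause Λ) : Prop :=
  ∀ q ∈ c, g q.1 ∈ q.2.den F g

def IsQuasiSafeIn (U : Set ℕ) (c : Clause Λ) : Prop :=
  ∀ q ∈ c, QuasiSafeIn U q.2

def rest (z : ℕ) (c : Clause Λ) : Clause Λ :=
  c.filter fun q => q.1 ≠ z

def constraint (z : ℕ) (c : Clause Λ) : LExp Λ :=
  interList ((c.filter fun q => q.1 = z).map Prod.snd)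

variable {F : Frame Λ} {g : ℕ → F.W} {U : Set ℕ} {z : ℕ}

theorem holds_update (hz : z ∉ U) {c : Clause Λ} (hc : ∀ q ∈ c, q.2.evars ⊆ U) (w : F.W) :
    c.Holds F (update g z w) ↔ (c.rest z).Holds F g ∧ w ∈ (c.constraint z).den F g := by
  have hden : ∀ q ∈ c, q.2.den F (update g z w) = q.2.den F g := fun q hq =>
    LExp.den_update_of_notMem_evars F g w fun h => hz (hc q hq h)
  simp only [Holds, rest, constraint, mem_den_interList, List.mem_filter, List.mem_map,
    decide_eq_true_eq]
  constructor
  · intro h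
    refine ⟨fun q ⟨hq, hqz⟩ => ?_, ?_⟩
    · simpa only [update_of_ne hqz, hden q hq] using h q hq
    · rintro _ ⟨q, ⟨hq, rfl⟩, rfl⟩
      simpa only [update_self, hden q hq] using h q hq
  · rintro ⟨hrest, hcons⟩ q hq
    rw [hden q hq]
    by_cases hqz : q.1 = z
    · rw [hqz, update_self]
      exact hcons q.2 ⟨q, ⟨hq, hqz⟩, rfl⟩
    · rw [update_of_ne hqz]
      exact hrest q ⟨hq, hqz⟩

end Clause

namespace Clause

variable {F : Frame Λ} {g : ℕ → F.W} {U : Set ℕ} {z : ℕ}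

theorem holds_cons {q : ℕ × LExp Λ} {c : Clause Λ} :
    Holds F g (q :: c) ↔ g q.1 ∈ q.2.den F g ∧ Holds F g c :=
  List.forall_mem_cons

theorem holds_append {c d : Clause Λ} : Holds F g (c ++ d) ↔ Holds F g c ∧ Holds F g d :=
  List.forall_mem_append

theorem holds_flatMap {T : List (Clause Λ)} {f : Clause Λ → Clause Λ} :
    Holds F g (T.flatMap f) ↔ ∀ c ∈ T, Holds F g (f c) :=
  List.forall_mem_flatMap

theorem IsQuasiSafeIn.rest {c : Clause Λ} (h : c.IsQuasiSafeIn U) : (c.rest z).IsQuasiSafeIn U :=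
  fun q hq => h q (List.mem_of_mem_filter hq)

theorem IsQuasiSafeIn.constraint {c : Clause Λ} (h : c.IsQuasiSafeIn U) :
    QuasiSafeIn U (c.constraint z) := by
  refine QuasiSafeIn.interList fun E hE => ?_
  obtain ⟨q, hq, rfl⟩ := List.mem_map.1 hE
  exact h q (List.mem_of_mem_filter hq)

def conj (cs ds : List (Clause Λ)) : List (Clause Λ) :=
  cs.flatMap fun c => ds.map (c ++ ·)

theorem exists_holds_conj {cs ds : List (Clause Λ)} :
    (∃ e ∈ conj cs ds, e.Holds F g) ↔
      (∃ c ∈ cs, c.Holds F g) ∧ ∃ d ∈ ds, d.Holds F g := by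
  simp only [conj, List.mem_flatMap, List.mem_map]
  constructor
  · rintro ⟨_, ⟨c, hc, d, hd, rfl⟩, hcd⟩
    exact ⟨⟨c, hc, (holds_append.1 hcd).1⟩, d, hd, (holds_append.1 hcd).2⟩
  · rintro ⟨⟨c, hc, hcH⟩, d, hd, hdH⟩
    exact ⟨_, ⟨c, hc, d, hd, rfl⟩, holds_append.2 ⟨hcH, hdH⟩⟩

theorem isQuasiSafeIn_conj {cs ds : List (Clause Λ)} (hcs : ∀ c ∈ cs, c.IsQuasiSafeIn U)
    (hds : ∀ d ∈ ds, d.IsQuasiSafeIn U) : ∀ e ∈ conj cs ds, e.IsQuasiSafeIn U := by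
  simp only [conj, List.mem_flatMap, List.mem_map]
  rintro _ ⟨c, hc, d, hd, rfl⟩ q hq
  exact (List.mem_append.1 hq).elim (hcs c hc q) (hds d hd q)

def exQuant (z : ℕ) (l : Λ) (v : ℕ) (cs : List (Clause Λ)) : List (Clause Λ) :=
  cs.map fun c => (v, .rinv l (c.constraint z)) :: c.rest z

theorem exists_holds_exQuant (hz : z ∉ U) {l : Λ} {v : ℕ} {cs : List (Clause Λ)}
    (hcs : ∀ c ∈ cs, c.IsQuasiSafeIn U) :
    (∃ e ∈ exQuant z l v cs, e.Holds F g) ↔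
      ∃ w, F.R l (g v) w ∧ ∃ c ∈ cs, c.Holds F (update g z w) := by
  have hupd : ∀ c ∈ cs, ∀ w : F.W, c.Holds F (update g z w) ↔
      (c.rest z).Holds F g ∧ w ∈ (c.constraint z).den F g := fun c hc =>
    holds_update hz fun q hq => (hcs c hc q hq).2
  simp only [exQuant, List.mem_map]
  constructor
  · rintro ⟨_, ⟨c, hc, rfl⟩, hH⟩
    obtain ⟨⟨w, hw, hwc⟩, hrest⟩ := holds_cons.1 hH
    exact ⟨w, hw, c, hc, (hupd c hc w).2 ⟨hrest, hwc⟩⟩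
  · rintro ⟨w, hw, c, hc, hH⟩
    obtain ⟨hrest, hwc⟩ := (hupd c hc w).1 hH
    exact ⟨_, ⟨c, hc, rfl⟩, holds_cons.2 ⟨⟨w, hw, hwc⟩, hrest⟩⟩

theorem isQuasiSafeIn_exQuant {l : Λ} {v : ℕ} {cs : List (Clause Λ)}
    (hcs : ∀ c ∈ cs, c.IsQuasiSafeIn U) : ∀ e ∈ exQuant z l v cs, e.IsQuasiSafeIn U := by
  simp only [exQuant, List.mem_map]
  rintro _ ⟨c, hc, rfl⟩ q hq
  rcases List.mem_cons.1 hq with rfl | hq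
  · exact .rinv l (hcs c hc).constraint
  · exact (hcs c hc).rest q hq

def allQuant (z : ℕ) (l : Λ) (v : ℕ) (cs : List (Clause Λ)) : List (Clause Λ) :=
  cs.sublists.map fun T =>
    (v, .rbox l (unionList (T.map (constraint z)))) :: T.flatMap (rest z)

theorem exists_holds_allQuant (hz : z ∉ U) {l : Λ} {v : ℕ} {cs : List (Clause Λ)}
    (hcs : ∀ c ∈ cs, c.IsQuasiSafeIn U) :
    (∃ e ∈ allQuant z l v cs, e.Holds F g) ↔
      ∀ w, F.R l (g v) w → ∃ c ∈ cs, c.Holds F (update g z w) := by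
  calc
    _ ↔ ∃ T ∈ cs.sublists, (∀ c ∈ T, (c.rest z).Holds F g) ∧
          ∀ w, F.R l (g v) w → ∃ c ∈ T, w ∈ (c.constraint z).den F g := by
      constructor
      · rintro ⟨_, hmem, hH⟩
        obtain ⟨T, hT, rfl⟩ := List.mem_map.1 hmem
        obtain ⟨hbox, hrest⟩ := holds_cons.1 hH
        refine ⟨T, hT, holds_flatMap.1 hrest, fun w hw => ?_⟩
        obtain ⟨E, hE, hwE⟩ := (mem_den_unionList F g w _).1 (hbox w hw)
        obtain ⟨c, hc, rfl⟩ := List.mem_map.1 hE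
        exact ⟨c, hc, hwE⟩
      · rintro ⟨T, hT, hrest, hcons⟩
        refine ⟨_, List.mem_map.2 ⟨T, hT, rfl⟩,
          holds_cons.2 ⟨fun w hw => ?_, holds_flatMap.2 hrest⟩⟩
        obtain ⟨c, hc, hwc⟩ := hcons w hw
        exact (mem_den_unionList F g w _).2 ⟨_, List.mem_map.2 ⟨c, hc, rfl⟩, hwc⟩
    _ ↔ ∀ w, F.R l (g v) w →
          ∃ c ∈ cs, (c.rest z).Holds F g ∧ w ∈ (c.constraint z).den F g :=
      (forall_exists_mem_and_iff_exists_sublist _ _ _ _).symm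
    _ ↔ _ := by
      refine forall₂_congr fun w _ => exists_congr fun c => and_congr_right fun hc => ?_
      exact (holds_update hz (fun q hq => (hcs c hc q hq).2) w).symm

theorem isQuasiSafeIn_allQuant {l : Λ} {v : ℕ} {cs : List (Clause Λ)}
    (hcs : ∀ c ∈ cs, c.IsQuasiSafeIn U) : ∀ e ∈ allQuant z l v cs, e.IsQuasiSafeIn U := by
  simp only [allQuant, List.mem_map]
  rintro _ ⟨T, hT, rfl⟩ q hq
  have hTcs : ∀ c ∈ T, c.IsQuasiSafeIn U := fun c hc =>
    hcs c ((List.mem_sublists.1 hT).subset hc)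
  rcases List.mem_cons.1 hq with rfl | hq
  · refine .rbox l (QuasiSafeIn.unionList fun E hE => ?_)
    obtain ⟨c, hc, rfl⟩ := List.mem_map.1 hE
    exact (hTcs c hc).constraint
  · obtain ⟨c, hc, hqc⟩ := List.mem_flatMap.1 hq
    exact (hTcs c hc).rest q hqc

end Clause

namespace KrF

def conjAtoms : Clause Λ → KrF Λ
  | [] => atom 0 .top
  | q :: c => and (atom q.1 q.2) (conjAtoms c)

def ofClauses : List (Clause Λ) → KrF Λ
  | [] => atom 0 .bot
  | c :: cs => or (conjAtoms c) (ofClauses cs)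

variable {F : Frame Λ} {g : ℕ → F.W}

theorem holds_conjAtoms (c : Clause Λ) : holds F g (conjAtoms c) ↔ c.Holds F g := by
  induction c with
  | nil => simp [conjAtoms, holds, LExp.den, Clause.Holds]
  | cons q c ih => rw [Clause.holds_cons, ← ih]; rfl

theorem holds_ofClauses (cs : List (Clause Λ)) :
    holds F g (ofClauses cs) ↔ ∃ c ∈ cs, c.Holds F g := by
  induction cs with
  | nil => simp [ofClauses, holds, LExp.den]
  | cons c cs ih => simp [ofClauses, holds, holds_conjAtoms, ih]

theorem noEx_ofClauses (cs : List (Clause Λ)) : NoEx (ofClauses cs) := by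
  have hconj : ∀ c : Clause Λ, NoEx (conjAtoms c) := fun c => by
    induction c with
    | nil => trivial
    | cons q c ih => exact ⟨trivial, ih⟩
  induction cs with
  | nil => trivial
  | cons c cs ih => exact ⟨hconj c, ih⟩

theorem atomsAll_ofClauses {P : LExp Λ → Prop} (htop : P .top) (hbot : P .bot)
    {cs : List (Clause Λ)} (h : ∀ c ∈ cs, ∀ q ∈ c, P q.2) : AtomsAll P (ofClauses cs) := by
  have hconj : ∀ c : Clause Λ, (∀ q ∈ c, P q.2) → AtomsAll P (conjAtoms c) := fun c => by
    induction c with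
    | nil => exact fun _ => htop
    | cons q c ih =>
        exact fun hc => ⟨hc q List.mem_cons_self, ih fun q' hq' => hc q' (by simp [hq'])⟩
  induction cs with
  | nil => exact hbot
  | cons c cs ih =>
      exact ⟨hconj c (h c List.mem_cons_self), ih fun c' hc' => h c' (by simp [hc'])⟩

theorem AtomsAll.mono {P Q : LExp Λ → Prop} (hPQ : ∀ E, P E → Q E) {φ : KrF Λ}
    (h : AtomsAll P φ) : AtomsAll Q φ := by
  induction φ with
  | atom y E => exact hPQ E h
  | and a b iha ihb | or a b iha ihb => exact ⟨iha h.1, ihb h.2⟩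
  | all y l x β ih | ex y l x β ih => exact ih h

theorem atomsAll_and {P Q : LExp Λ → Prop} {φ : KrF Λ} :
    AtomsAll (fun E => P E ∧ Q E) φ ↔ AtomsAll P φ ∧ AtomsAll Q φ := by
  induction φ with
  | atom y E => rfl
  | and a b iha ihb | or a b iha ihb =>
      simp only [AtomsAll, iha, ihb]
      tauto
  | all y l x β ih | ex y l x β ih => exact ih

theorem gkok_true_iff {U : Set ℕ} {φ : KrF Λ} :
    GKok U true φ ↔ AtomsAll (fun E => E.evars ⊆ U) φ := by
  induction φ with
  | atom y E => rfl
  | and a b iha ihb | or a b iha ihb => exact and_congr iha ihb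
  | all y l x β ih | ex y l x β ih => exact ih

theorem exists_clauses {U : Set ℕ} (γ : KrF Λ) (hU : Disjoint (bv γ) U)
    (hγ : AtomsAll (QuasiSafeIn U) γ) :
    ∃ cs : List (Clause Λ), (∀ c ∈ cs, c.IsQuasiSafeIn U) ∧
      ∀ (F : Frame Λ) (g : ℕ → F.W), holds F g γ ↔ ∃ c ∈ cs, c.Holds F g := by
  induction γ with
  | atom s E =>
      refine ⟨[[(s, E)]], by simpa [Clause.IsQuasiSafeIn, AtomsAll] using hγ, fun F g => ?_⟩
      simp [holds, Clause.Holds]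
  | and a b iha ihb =>
      obtain ⟨cs, hcs, hsem⟩ := iha (Set.disjoint_union_left.1 hU).1 hγ.1
      obtain ⟨ds, hds, hsem'⟩ := ihb (Set.disjoint_union_left.1 hU).2 hγ.2
      refine ⟨Clause.conj cs ds, Clause.isQuasiSafeIn_conj hcs hds, fun F g => ?_⟩
      rw [Clause.exists_holds_conj, ← hsem, ← hsem']
      rfl
  | or a b iha ihb =>
      obtain ⟨cs, hcs, hsem⟩ := iha (Set.disjoint_union_left.1 hU).1 hγ.1
      obtain ⟨ds, hds, hsem'⟩ := ihb (Set.disjoint_union_left.1 hU).2 hγ.2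
      refine ⟨cs ++ ds, fun c hc => (List.mem_append.1 hc).elim (hcs c) (hds c), fun F g => ?_⟩
      simp only [holds, hsem, hsem', List.mem_append, or_and_right, exists_or]
  | all z l v γ ih =>
      obtain ⟨hz, hγU⟩ := Set.disjoint_insert_left.1 hU
      obtain ⟨cs, hcs, hsem⟩ := ih hγU hγ
      refine ⟨Clause.allQuant z l v cs, Clause.isQuasiSafeIn_allQuant hcs, fun F g => ?_⟩
      rw [Clause.exists_holds_allQuant hz hcs]
      exact forall₂_congr fun w _ => hsem F _
  | ex z l v γ ih =>
      obtain ⟨hz, hγU⟩ := Set.disjoint_insert_left.1 hU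
      obtain ⟨cs, hcs, hsem⟩ := ih hγU hγ
      refine ⟨Clause.exQuant z l v cs, Clause.isQuasiSafeIn_exQuant hcs, fun F g => ?_⟩
      rw [Clause.exists_holds_exQuant hz hcs]
      exact exists_congr fun w => and_congr_right fun _ => hsem F _

theorem exists_noEx_equiv (φ : KrF Λ) {U : Set ℕ} (hc : CleanBound φ) (hU : Disjoint (bv φ) U)
    (hs : AtomsAll QuasiSafe φ) (hk : GKok U false φ) :
    ∃ β : KrF Λ, NoEx β ∧ AtomsAll QuasiSafe β ∧
      ∀ (F : Frame Λ) (g : ℕ → F.W), holds F g φ ↔ holds F g β := by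
  induction φ generalizing U with
  | atom s E => exact ⟨atom s E, trivial, hs, fun _ _ => Iff.rfl⟩
  | and a b iha ihb =>
      obtain ⟨βa, hna, hsa, hsema⟩ := iha hc.1 (Set.disjoint_union_left.1 hU).1 hs.1 hk.1
      obtain ⟨βb, hnb, hsb, hsemb⟩ := ihb hc.2.1 (Set.disjoint_union_left.1 hU).2 hs.2 hk.2
      exact ⟨and βa βb, ⟨hna, hnb⟩, ⟨hsa, hsb⟩,
        fun F g => and_congr (hsema F g) (hsemb F g)⟩
  | or a b iha ihb =>
      obtain ⟨βa, hna, hsa, hsema⟩ := iha hc.1 (Set.disjoint_union_left.1 hU).1 hs.1 hk.1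
      obtain ⟨βb, hnb, hsb, hsemb⟩ := ihb hc.2.1 (Set.disjoint_union_left.1 hU).2 hs.2 hk.2
      exact ⟨or βa βb, ⟨hna, hnb⟩, ⟨hsa, hsb⟩,
        fun F g => or_congr (hsema F g) (hsemb F g)⟩
  | all y l x γ ih =>
      have hγU : Disjoint (bv γ) (insert y U) :=
        Set.disjoint_insert_right.2 ⟨hc.2, (Set.disjoint_insert_left.1 hU).2⟩
      obtain ⟨β, hn, hsβ, hsem⟩ := ih hc.1 hγU hs hk
      exact ⟨all y l x β, hn, hsβ, fun F g => forall₂_congr fun w _ => hsem F _⟩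
  | ex y l x γ =>
      obtain ⟨cs, hcs, hsem⟩ := exists_clauses (ex y l x γ) hU
        (atomsAll_and.2 ⟨hs, gkok_true_iff.1 hk⟩)
      exact ⟨ofClauses cs, noEx_ofClauses cs,
        atomsAll_ofClauses QuasiSafe.top QuasiSafe.bot fun c hc q hq => (hcs c hc q hq).1,
        fun F g => (hsem F g).trans (holds_ofClauses cs).symm⟩

end KrF

/-- every generalized Kracht formula is equivalent, in every Kripke frame,
to a first-order formula obtained from quasi-safe atoms using only conjunction, disjunction
and restricted universal quantification. -/
theorem statement18 {Λ : Type u} (α : KrF Λ) (x₀ : ℕ) (hα : IsGenKracht α x₀) :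
    ∃ β : KrF Λ, β.NoEx ∧ β.AtomsAll QuasiSafe ∧
      ∀ (F : Frame Λ) (g : ℕ → F.W), KrF.holds F g α ↔ KrF.holds F g β := by
  obtain ⟨⟨⟨hfree, hbound⟩, hsafe, hgk⟩, -⟩ := hα
  exact α.exists_noEx_equiv hbound (Set.disjoint_iff_inter_eq_empty.2 hfree).symm
    (hsafe.mono fun _ => QuasiSafe.safe) hgk
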